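/- arXiv:1610.08684 — 4 statements merged into one kernel-verified Lean document; each statement's English description precedes it below -/
import Mathlib

section
/- Let $\int_n$ denote the simplex iterated integral of $n$ polynomials. If $p,q_1,\dots,q_n$ are polynomials with $p(0)=0$ and $p(1)=0$, then $\int_{n+1} q_1\otimes\cdots\otimes q_n\otimes p' = -\int_n q_1\otimes\cdots\otimes (q_n p)$. -/
/-!
Fubini in the last variable: for fixed `0 ≤ t₁ ≤ ⋯ ≤ tₙ₊₁ ≤ 1` the innermost integral is
`∫_{tₙ₊₁}^1 p'(s) ds = p(1) - p(tₙ₊₁) = -p(tₙ₊₁)`, which is absorbed into the last factor.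
-/

open MeasureTheory

/-- The standard simplex `0 ≤ t_1 ≤ ⋯ ≤ t_n ≤ 1` in `ℝⁿ`. -/
def simplexSet (n : ℕ) : Set (Fin n → ℝ) :=
  {t | (∀ i, t i ∈ Set.Icc (0:ℝ) 1) ∧ Monotone t}

/-- The simplex iterated integral `∫ₙ p₁ ⊗ ⋯ ⊗ pₙ` of `n` polynomials. -/
noncomputable def simplexInt (n : ℕ) (p : Fin n → Polynomial ℝ) : ℝ :=
  ∫ t in simplexSet n, ∏ i, (p i).eval (t i)

open Set Polynomial

lemma simplexSet_eq_pi_inter (n : ℕ) :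
    simplexSet n = univ.pi (fun _ => Icc 0 1) ∩ {t | Monotone t} := by
  ext t
  simp only [simplexSet, mem_inter_iff, mem_univ_pi]
  rfl

lemma isClosed_simplexSet (n : ℕ) : IsClosed (simplexSet n) := by
  rw [simplexSet_eq_pi_inter]
  exact (isClosed_set_pi fun _ _ => isClosed_Icc).inter isClosed_monotone

lemma isCompact_simplexSet (n : ℕ) : IsCompact (simplexSet n) :=
  (isCompact_univ_pi fun _ => isCompact_Icc).of_isClosed_subset (isClosed_simplexSet n)
    (simplexSet_eq_pi_inter n ▸ inter_subset_left)

lemma Fin.monotone_snoc_iff {α : Type*} [Preorder α] {n : ℕ} (u : Fin (n + 1) → α) (s : α) :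
    Monotone (Fin.snoc u s : Fin (n + 2) → α) ↔ Monotone u ∧ u (Fin.last n) ≤ s := by
  rw [Fin.monotone_iff_le_succ, Fin.forall_fin_succ', Fin.monotone_iff_le_succ]
  simp only [Fin.succ_castSucc, Fin.succ_last, Fin.snoc_castSucc, Fin.snoc_last]

lemma snoc_mem_simplexSet_iff {m : ℕ} (u : Fin (m + 1) → ℝ) (s : ℝ) :
    Fin.snoc u s ∈ simplexSet (m + 2) ↔
      u ∈ simplexSet (m + 1) ∧ s ∈ Icc (u (Fin.last m)) 1 := by
  simp only [simplexSet, mem_ofPred_eq, Fin.forall_fin_succ' (n := m + 1), Fin.snoc_castSucc,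
    Fin.snoc_last, Fin.monotone_snoc_iff, mem_Icc]
  constructor
  · rintro ⟨⟨hu, -, hs1⟩, hmono, hle⟩
    exact ⟨⟨hu, hmono⟩, hle, hs1⟩
  · rintro ⟨⟨hu, hmono⟩, hle, hs1⟩
    exact ⟨⟨hu, (hu (Fin.last m)).1.trans hle, hs1⟩, hmono, hle⟩

theorem integral_eq_integral_integral_snoc {E : Type*} [NormedAddCommGroup E] [NormedSpace ℝ E]
    {m : ℕ} (f : (Fin (m + 1) → ℝ) → E) (hf : Integrable f) :
    ∫ t, f t = ∫ u, ∫ s, f (Fin.snoc u s) := by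
  have he := (volume_preserving_piFinSuccAbove (fun _ : Fin (m + 1) => ℝ) (Fin.last m)).symm
  have hsymm : ∀ x : ℝ × (Fin m → ℝ),
      (MeasurableEquiv.piFinSuccAbove (fun _ => ℝ) (Fin.last m)).symm x = Fin.snoc x.2 x.1 :=
    fun x => Fin.insertNth_last' x.1 x.2
  rw [← he.integral_comp', Measure.volume_eq_prod, integral_prod_symm]
  · simp only [hsymm]
  · rw [← Measure.volume_eq_prod]
    exact (he.integrable_comp_emb (MeasurableEquiv.measurableEmbedding _)).2 hf

theorem setIntegral_simplexSet_succ {E : Type*} [NormedAddCommGroup E] [NormedSpace ℝ E]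
    {m : ℕ} (f : (Fin (m + 2) → ℝ) → E) (hf : IntegrableOn f (simplexSet (m + 2))) :
    ∫ t in simplexSet (m + 2), f t =
      ∫ u in simplexSet (m + 1), ∫ s in Icc (u (Fin.last m)) 1, f (Fin.snoc u s) := by
  have hS := (isClosed_simplexSet (m + 2)).measurableSet
  rw [← integral_indicator hS,
    integral_eq_integral_integral_snoc _ ((integrable_indicator_iff hS).2 hf),
    ← integral_indicator (isClosed_simplexSet (m + 1)).measurableSet]
  congr with u
  by_cases hu : u ∈ simplexSet (m + 1)
  · rw [indicator_of_mem hu, ← integral_indicator measurableSet_Icc]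
    congr with s
    simp only [indicator, snoc_mem_simplexSet_iff, hu, true_and]
  · simp only [indicator, snoc_mem_simplexSet_iff, hu, false_and, if_false, integral_zero]

lemma prod_eval_snoc {R : Type*} [CommSemiring R] {n : ℕ} (q : Fin n → R[X])
    (r : R[X]) (u : Fin n → R) (s : R) :
    ∏ i, ((Fin.snoc q r : Fin (n + 1) → R[X]) i).eval (Fin.snoc u s i) =
      (∏ i, (q i).eval (u i)) * r.eval s := by
  simp only [Fin.prod_univ_castSucc, Fin.snoc_castSucc, Fin.snoc_last]

lemma prod_eval_update_mul {R ι : Type*} [CommSemiring R] [Fintype ι] [DecidableEq ι]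
    (q : ι → R[X]) (p : R[X]) (u : ι → R) (j : ι) :
    ∏ i, (Function.update q j (q j * p) i).eval (u i) =
      (∏ i, (q i).eval (u i)) * p.eval (u j) := by
  rw [← Finset.mul_prod_erase _ _ (Finset.mem_univ j),
    ← Finset.mul_prod_erase _ (fun i => (q i).eval (u i)) (Finset.mem_univ j),
    Finset.prod_congr rfl fun i hi => by rw [Function.update_of_ne (Finset.ne_of_mem_erase hi)]]
  simp only [Function.update_self, Polynomial.eval_mul]
  ring

lemma integral_Icc_eval_derivative (p : ℝ[X]) {a b : ℝ} (hab : a ≤ b) :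
    ∫ s in Icc a b, (derivative p).eval s = p.eval b - p.eval a := by
  rw [integral_Icc_eq_integral_Ioc, ← intervalIntegral.integral_of_le hab,
    intervalIntegral.integral_eq_sub_of_hasDerivAt (fun x _ => p.hasDerivAt x)
      ((derivative p).continuous.intervalIntegrable _ _)]

theorem stmt_3_general (n : ℕ) (p : Polynomial ℝ) (q : Fin (n + 1) → Polynomial ℝ)
    (hp1 : p.eval 1 = 0) :
    simplexInt (n + 2) (Fin.snoc q (Polynomial.derivative p)) =
      - simplexInt (n + 1) (Function.update q (Fin.last n) (q (Fin.last n) * p)) := by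
  have hcont : Continuous fun t : Fin (n + 2) → ℝ =>
      ∏ i, ((Fin.snoc q (derivative p) : Fin (n + 2) → ℝ[X]) i).eval (t i) := by
    fun_prop
  have hint := hcont.continuousOn.integrableOn_compact (μ := volume) (isCompact_simplexSet _)
  rw [simplexInt, simplexInt, ← integral_neg, setIntegral_simplexSet_succ _ hint]
  refine setIntegral_congr_fun (isClosed_simplexSet _).measurableSet fun u hu => ?_
  simp only [prod_eval_snoc, integral_const_mul,
    integral_Icc_eval_derivative p (hu.1 (Fin.last n)).2, hp1, prod_eval_update_mul]
  ring

/-- If `p(0) = 0` and `p(1) = 0` then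
`∫_{n+1} q₁ ⊗ ⋯ ⊗ qₙ ⊗ p' = - ∫ₙ q₁ ⊗ ⋯ ⊗ (qₙ p)`. -/
theorem stmt_3 (n : ℕ) (p : Polynomial ℝ) (q : Fin (n + 1) → Polynomial ℝ)
    (hp0 : p.eval 0 = 0) (hp1 : p.eval 1 = 0) :
    simplexInt (n + 2) (Fin.snoc q (Polynomial.derivative p)) =
      - simplexInt (n + 1) (Function.update q (Fin.last n) (q (Fin.last n) * p)) :=
  stmt_3_general n p q hp1
end

section
/- Let $\boldsymbol{i}\colon\mathfrak{g}\to\operatorname{End}^*(V)[-1]$ be a Cartan homotopy and $v\in V$ a closed element of degree 0. Then $\boldsymbol{i}^v\colon\mathfrak{g}\to\operatorname{Aff}(V)[-1]$ defined by $\boldsymbol{i}^v_x=(\boldsymbol{i}_x,-\boldsymbol{i}_x(v))$ is a Cartan homotopy, and its boundary is $\boldsymbol{l}^v_x=(\boldsymbol{l}_x,-\boldsymbol{l}_x(v))$ where $\boldsymbol{l}$ is the boundary of $\boldsymbol{i}$. -/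
/-- Graded commutator bracket on `End*(V)` for endomorphisms of degrees `p, q`. -/
noncomputable def endBr {K V : Type*} [Field K] [AddCommGroup V] [Module K V]
    (p q : ℤ) (f g : V →ₗ[K] V) : V →ₗ[K] V :=
  f ∘ₗ g - ((-1 : K) ^ (p * q)) • (g ∘ₗ f)

/-- The differential `[d, -]` on `End*(V)` applied to a degree `a` endomorphism. -/
noncomputable def endD {K V : Type*} [Field K] [AddCommGroup V] [Module K V]
    (dV : V →ₗ[K] V) (a : ℤ) (f : V →ₗ[K] V) : V →ₗ[K] V :=
  dV ∘ₗ f - ((-1 : K) ^ a) • (f ∘ₗ dV)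

/-- The bracket on `Aff(V) = End*(V) ⊕ V`. -/
noncomputable def affBr {K V : Type*} [Field K] [AddCommGroup V] [Module K V]
    (p q : ℤ) (x y : (V →ₗ[K] V) × V) : (V →ₗ[K] V) × V :=
  (x.1 ∘ₗ y.1 - ((-1 : K) ^ (p * q)) • (y.1 ∘ₗ x.1),
   x.1 y.2 - ((-1 : K) ^ (p * q)) • (y.1 x.2))

/-- The differential of `Aff(V)` on degree `a` elements. -/
noncomputable def affD {K V : Type*} [Field K] [AddCommGroup V] [Module K V]
    (dV : V →ₗ[K] V) (a : ℤ) (x : (V →ₗ[K] V) × V) : (V →ₗ[K] V) × V :=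
  (endD dV a x.1, dV x.2)

/-- If `𝒊 : 𝔤 → End*(V)[-1]` is a Cartan homotopy and `v ∈ V` is closed of degree `0`,
then `𝒊ᵛ_x = (𝒊_x, -𝒊_x v)` is a Cartan homotopy `𝔤 → Aff(V)[-1]`, with boundary
`𝒍ᵛ_x = (𝒍_x, -𝒍_x v)` where `𝒍` is the boundary of `𝒊`.
Here `x` ranges over homogeneous elements of `𝔤`, with degree recorded by `deg`,
`lb` is the bracket of `𝔤` and `ld` its differential. -/
theorem stmt_8 {K V : Type*} [Field K] [AddCommGroup V] [Module K V] {g : Type*}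
    (dV : V →ₗ[K] V) (hdd : dV ∘ₗ dV = 0)
    (v : V) (hv : dV v = 0)
    (lb : g → g → g) (ld : g → g) (deg : g → ℤ) (i : g → V →ₗ[K] V)
    -- `𝒊` is a Cartan homotopy: `[𝒊_x, 𝒊_y] = 0` and `𝒊_{[x,y]} = [𝒊_x, d𝒊_y]`
    (hi1 : ∀ x y : g, endBr (deg x - 1) (deg y - 1) (i x) (i y) = 0)
    (hi2 : ∀ x y : g,
      i (lb x y) = endBr (deg x - 1) (deg y) (i x) (endD dV (deg y - 1) (i y))) :
    -- `[𝒊ᵛ_x, 𝒊ᵛ_y] = 0`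
    (∀ x y : g,
      affBr (deg x - 1) (deg y - 1) (i x, - i x v) (i y, - i y v) = 0) ∧
    -- `𝒊ᵛ_{[x,y]} = [𝒊ᵛ_x, d 𝒊ᵛ_y]`
    (∀ x y : g,
      ((i (lb x y), - i (lb x y) v) : (V →ₗ[K] V) × V) =
        affBr (deg x - 1) (deg y) (i x, - i x v)
          (affD dV (deg y - 1) (i y, - i y v))) ∧
    -- the boundary of `𝒊ᵛ` is `x ↦ (𝒍_x, - 𝒍_x v)`
    (∀ x : g,
      affD dV (deg x - 1) (i x, - i x v)
          + ((i (ld x), - i (ld x) v) : (V →ₗ[K] V) × V) =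
        ((endD dV (deg x - 1) (i x) + i (ld x),
          - (endD dV (deg x - 1) (i x) + i (ld x)) v) : (V →ₗ[K] V) × V)) := by
  refine ⟨?_, ?_, ?_⟩
  · intro x y
    have h1 := hi1 x y
    unfold endBr at h1
    have h2 := congrArg (fun f : V →ₗ[K] V => f v) h1
    simp only [LinearMap.sub_apply, LinearMap.comp_apply, LinearMap.smul_apply,
      LinearMap.zero_apply] at h2
    unfold affBr
    refine Prod.ext (by simpa using h1) ?_
    simp only [map_neg, smul_neg, sub_neg_eq_add, Prod.snd_zero]
    rw [neg_add_eq_sub, sub_eq_zero]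
    rw [sub_eq_zero] at h2
    exact h2.symm
  · intro x y
    have h2 := congrArg (fun f : V →ₗ[K] V => f v) (hi2 x y)
    simp only [endBr, endD, LinearMap.sub_apply, LinearMap.comp_apply,
      LinearMap.smul_apply, hv, map_zero, smul_zero, sub_zero] at h2
    unfold affBr affD
    refine Prod.ext (by simpa [endBr] using hi2 x y) ?_
    simp only [map_neg, smul_neg, sub_neg_eq_add, endD, LinearMap.sub_apply,
      LinearMap.comp_apply, LinearMap.smul_apply, hv, map_zero, smul_zero, sub_zero]
    rw [h2]
    ring_nf
    abel
  · intro x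
    unfold affD endD
    refine Prod.ext (by simp) ?_
    simp only [Prod.snd_add, map_neg, LinearMap.add_apply, LinearMap.sub_apply,
      LinearMap.comp_apply, LinearMap.smul_apply, hv, map_zero, smul_zero, sub_zero]
    abel
end

section
/- Let $\mathfrak{g}$ be a DG-Lie algebra over a field of characteristic 0, $A$ a local Artin algebra with maximal ideal $\mathfrak{m}_A$, and $x\in\mathfrak{g}^1\otimes\mathfrak{m}_A$ a Maurer-Cartan element, i.e., $dx+\frac12[x,x]=0$. Then in $\operatorname{cone}(\operatorname{Id}_{\mathfrak{g}})\otimes\mathfrak{m}_A$ the gauge action satisfies $e^{-\flat x}\ast 0 = x$, i.e., the series $\sum_{n\ge0}\frac{[-\flat x,-]^n}{(n+1)!}(d(\flat x))$ equals $x$. -/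
/-! The term of index `n` of the series is `[-♭x, -]ⁿ (d(♭x))`, and `[♭a, -]` kills the
`♭`-component and lands in it, so `[-♭x, -]` squares to zero and only the terms `n = 0, 1`
survive. They are `d(♭x) = (x, -dx)` and `½ [-♭x, d(♭x)] = (0, -½[x, x])`, whose sum is
`(x, -(dx + ½[x, x])) = (x, 0)` by the Maurer-Cartan equation. -/

theorem Function.iterate_eq_of_le_of_isFixedPt {α : Type*} {f : α → α} {v z : α} {m n : ℕ}
    (hz : f.IsFixedPt z) (hv : f^[m] v = z) (hmn : m ≤ n) : f^[n] v = z := by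
  obtain ⟨k, rfl⟩ := Nat.exists_eq_add_of_le' hmn
  rw [Function.iterate_add_apply, hv, Function.iterate_fixed hz]

theorem stmt_12_general {K M : Type*} [Field K] [AddCommGroup M] [Module K M]
    (lb : M →ₗ[K] M →ₗ[K] M) (dM : M →ₗ[K] M)
    (x : M) (hx : dM x + (2 : K)⁻¹ • lb x x = 0)
    (N : ℕ) (hN : 2 ≤ N) :
    (∑ n ∈ Finset.range N,
        ((Nat.factorial (n + 1) : K))⁻¹ •
          ((fun w : M × M => ((0 : M), lb (-x) w.1))^[n] (x, - dM x))) =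
      ((x, 0) : M × M) := by
  set bracket : M × M → M × M := fun w => (0, lb (-x) w.1)
  have bracket_zero : bracket.IsFixedPt 0 := by simp [bracket, Function.IsFixedPt]
  have bracket_sq : bracket^[2] (x, -dM x) = 0 := by simp [bracket]
  have tail_vanishes (n : ℕ) (hn : n ≥ 2) :
      ((Nat.factorial (n + 1) : K))⁻¹ • bracket^[n] (x, -dM x) = 0 := by
    rw [Function.iterate_eq_of_le_of_isFixedPt bracket_zero bracket_sq hn, smul_zero]
  rw [Finset.eventually_constant_sum tail_vanishes hN, Finset.sum_range_succ,
    Finset.sum_range_one]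
  ext
  · simp [bracket]
  · have hfact : ((Nat.factorial 2 : ℕ) : K) = 2 := by norm_num
    simp only [bracket, Function.iterate_zero, Function.iterate_one, id_eq, Prod.snd_add,
      Prod.smul_snd, zero_add, Nat.factorial_one, Nat.cast_one, inv_one, one_smul, hfact,
      map_neg, LinearMap.neg_apply]
    linear_combination (norm := module) -hx

/-- Let `𝔤` be a DG-Lie algebra over a field of characteristic `0`, tensored with the
maximal ideal of a local Artin algebra; we model `𝔤 ⊗ 𝔪_A` as a vector space `M` with
(bilinear) bracket `lb`, differential `dM`, whose Maurer-Cartan elements satisfy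
`dx + ½[x,x] = 0`.  In `cone(Id_𝔤) ⊗ 𝔪_A`, identified with pairs `(u, ♭w) = (u, w)`,
one has `[♭a, (u, w)] = (0, [a, u])` and `d(♭x) = (x, -dx)`.  The gauge-action series
`∑_{n ≥ 0} [-♭x, -]ⁿ/(n+1)! (d(♭x))` equals `x = (x, 0)`: all terms of index `n ≥ 2`
vanish, so every partial sum with `N ≥ 2` terms equals `(x, 0)`. -/
theorem stmt_12 {K M : Type*} [Field K] [CharZero K] [AddCommGroup M] [Module K M]
    (lb : M →ₗ[K] M →ₗ[K] M) (dM : M →ₗ[K] M)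
    (x : M) (hx : dM x + (2 : K)⁻¹ • lb x x = 0)
    (N : ℕ) (hN : 2 ≤ N) :
    (∑ n ∈ Finset.range N,
        ((Nat.factorial (n + 1) : K))⁻¹ •
          ((fun w : M × M => ((0 : M), lb (-x) w.1))^[n] (x, - dM x))) =
      ((x, 0) : M × M) :=
  stmt_12_general lb dM x hx N hN
end

section
/- Let $V$ be a DG-vector space over a field $\mathbb{K}$ of characteristic 0, $F\subseteq V$ a DG-subspace, $A$ a local Artin $\mathbb{K}$-algebra with maximal ideal $\mathfrak{m}_A$, and $\xi\in\operatorname{End}^0(V)\otimes\mathfrak{m}_A$. Then $e^\xi(F\otimes A)=F\otimes A$ if and only if $\xi\in\operatorname{End}^0(V;F)\otimes\mathfrak{m}_A$, where $\operatorname{End}^0(V;F)$ denotes degree 0 endomorphisms preserving $F$. -/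
/-!
For nilpotent `ξ` one has `e^ξ = 1 + ξ + ξ² g(ξ)` for a polynomial `g`. If `ξ` preserves a
submodule `N`, so does `e^ξ`, and `e^ξ - 1` is nilpotent, so `e^ξ` restricts to an automorphism
of `N`. Conversely, the endomorphisms preserving `N` form a subalgebra, and a nilpotent `x` lies
in every subalgebra containing `y = x + x² g(x)`: as `yʲ ≡ xʲ` modulo `xʲ⁺¹ A[x]`, downward
induction on `j` puts all of `xʲ A[x]` into it. This stands in for taking the logarithm of `e^ξ`.
-/

open IsLocalRing TensorProduct

variable {K A V : Type*}

/-- The exponential `e^ξ = ∑ ξⁿ/n!` of an `A`-linear endomorphism, as a finitely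
supported sum (all but finitely many terms vanish when `ξ` is nilpotent). -/
noncomputable def expEnd (K : Type*) {A M : Type*} [Field K] [CommRing A] [Algebra K A]
    [AddCommGroup M] [Module A M] (ξ : Module.End A M) : Module.End A M :=
  ∑ᶠ n : ℕ, algebraMap K A ((Nat.factorial n : K))⁻¹ • ξ ^ n

open Polynomial

theorem Subalgebra.mem_of_add_sq_mul_aeval_mem {R : Type*} [CommRing A] [Ring R] [Algebra A R]
    {S : Subalgebra A R} {x : R} (hx : IsNilpotent x) (q : A[X])
    (h : x + x ^ 2 * aeval x q ∈ S) : x ∈ S := by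
  obtain ⟨k, hk⟩ := hx
  have hpow : ∀ j : ℕ, ∃ r : A[X],
      (x + x ^ 2 * aeval x q) ^ j = x ^ j + x ^ (j + 1) * aeval x r := by
    intro j
    obtain ⟨r, hr⟩ := sub_dvd_pow_sub_pow (1 + X * q) 1 j
    rw [one_pow, add_sub_cancel_left] at hr
    refine ⟨q * r, ?_⟩
    have : (X + X ^ 2 * q) ^ j = X ^ j + X ^ (j + 1) * (q * r) := by
      rw [show X + X ^ 2 * q = X * (1 + X * q) by ring, mul_pow, eq_add_of_sub_eq' hr]
      ring
    simpa using congrArg (aeval x) this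
  have key : ∀ i j : ℕ, k ≤ i + j → ∀ p : A[X], x ^ j * aeval x p ∈ S := by
    intro i
    induction i with
    | zero =>
      intro j hj p
      rw [pow_eq_zero_of_le (by omega) hk, zero_mul]
      exact zero_mem _
    | succ i ih =>
      intro j hj p
      have hxj : x ^ j ∈ S := by
        obtain ⟨r, hr⟩ := hpow j
        simpa [hr] using sub_mem (pow_mem h j) (ih (j + 1) (by omega) r)
      rw [← X_mul_divX_add p, map_add, map_mul, aeval_X, aeval_C, mul_add, ← mul_assoc,
        ← pow_succ, ← Algebra.commutes]
      exact add_mem (ih (j + 1) (by omega) _) (mul_mem (algebraMap_mem _ _) hxj)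
  simpa using key k 1 (by omega) 1

section

variable {M : Type*} [CommRing A] [AddCommGroup M] [Module A M]

def Submodule.stabilizerSubalgebra (N : Submodule A M) : Subalgebra A (Module.End A M) where
  carrier := {f | ∀ x ∈ N, f x ∈ N}
  mul_mem' hf hg x hx := hf _ (hg x hx)
  add_mem' hf hg x hx := N.add_mem (hf x hx) (hg x hx)
  algebraMap_mem' c _ hx := N.smul_mem c hx

theorem Submodule.mem_stabilizerSubalgebra {N : Submodule A M} {f : Module.End A M} :
    f ∈ N.stabilizerSubalgebra ↔ ∀ x ∈ N, f x ∈ N :=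
  Iff.rfl

theorem Submodule.map_eq_self_of_isNilpotent_sub_one {N : Submodule A M} {f : Module.End A M}
    (hf : f ∈ N.stabilizerSubalgebra) (hnil : IsNilpotent (f - 1)) : N.map f = N := by
  have hg : f - 1 ∈ N.stabilizerSubalgebra := sub_mem hf (one_mem _)
  have hunit : IsUnit (f.restrict hf) := by
    have : f.restrict hf = 1 + (f - 1).restrict hg := by
      ext x
      change f x = x + (f - 1) x
      simp
    rw [this]
    exact (Module.End.isNilpotent.restrict hg hnil).isUnit_one_add
  refine le_antisymm (Submodule.map_le_iff_le_comap.mpr hf) fun y hy => ?_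
  obtain ⟨z, hz⟩ := ((Module.End.isUnit_iff _).mp hunit).surjective ⟨y, hy⟩
  exact ⟨z, z.2, congrArg Subtype.val hz⟩

theorem Module.End.isNilpotent_of_mem_smul_top {I : Ideal A} (hI : IsNilpotent I)
    {f : Module.End A M} (hf : f ∈ I • (⊤ : Submodule A (Module.End A M))) : IsNilpotent f := by
  have hrange : LinearMap.range f ≤ I • ⊤ := by
    rintro - ⟨x, rfl⟩
    have := Submodule.mem_map_of_mem (f := LinearMap.applyₗ x) hf
    rw [Submodule.map_smul''] at this
    exact Submodule.smul_mono le_rfl le_top this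
  have hpow : ∀ n : ℕ, LinearMap.range (f ^ n) ≤ I ^ n • ⊤ := by
    intro n
    induction n with
    | zero => simp
    | succ n ih =>
      calc LinearMap.range (f ^ (n + 1)) = (LinearMap.range (f ^ n)).map f := by
            rw [pow_succ', Module.End.mul_eq_comp, LinearMap.range_comp]
        _ ≤ (I ^ n • ⊤ : Submodule A M).map f := Submodule.map_mono ih
        _ = I ^ n • LinearMap.range f := by rw [Submodule.map_smul'', Submodule.map_top]
        _ ≤ I ^ n • I • ⊤ := Submodule.smul_mono le_rfl hrange
        _ = I ^ (n + 1) • ⊤ := by rw [← Submodule.smul_assoc, Ideal.smul_eq_mul, pow_succ]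
  obtain ⟨k, hk⟩ := hI
  exact ⟨k, LinearMap.range_eq_bot.mp (by simpa [hk] using hpow k)⟩

variable (K) [Field K] [Algebra K A]

theorem expEnd_eq_sum_range {ξ : Module.End A M} {k : ℕ} (hk : ξ ^ k = 0) :
    expEnd K ξ = ∑ n ∈ Finset.range k, algebraMap K A ((n.factorial : K))⁻¹ • ξ ^ n := by
  refine finsum_eq_sum_of_support_subset _ fun n hn => ?_
  by_contra hnk
  rw [Finset.coe_range, Set.mem_Iio, not_lt] at hnk
  exact hn (by simp only [pow_eq_zero_of_le hnk hk, smul_zero])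

theorem exists_expEnd_eq_one_add {ξ : Module.End A M} (hξ : IsNilpotent ξ) :
    ∃ q : A[X], expEnd K ξ = 1 + (ξ + ξ ^ 2 * aeval ξ q) := by
  obtain ⟨k, hk⟩ := hξ
  refine ⟨∑ n ∈ Finset.range k, C (algebraMap K A ((n + 2).factorial : K)⁻¹) * X ^ n, ?_⟩
  rw [expEnd_eq_sum_range K (pow_eq_zero_of_le (Nat.le_add_right k 2) hk),
    Finset.sum_range_succ', Finset.sum_range_succ', map_sum, Finset.mul_sum]
  have hterm : ∀ n : ℕ, algebraMap K A ((n + 1 + 1).factorial : K)⁻¹ • ξ ^ (n + 1 + 1) =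
      ξ ^ 2 * aeval ξ (C (algebraMap K A ((n + 2).factorial : K)⁻¹) * X ^ n) := by
    intro n
    rw [map_mul, aeval_C, aeval_X_pow, ← Algebra.smul_def, mul_smul_comm, ← pow_add, add_comm 2]
  simp only [hterm, Nat.factorial_zero, Nat.factorial_one, Nat.cast_one, inv_one, map_one,
    one_smul, pow_zero, zero_add, pow_one]
  abel

theorem map_expEnd_eq_self_iff {ξ : Module.End A M} (hξ : IsNilpotent ξ) (N : Submodule A M) :
    N.map (expEnd K ξ) = N ↔ ∀ u ∈ N, ξ u ∈ N := by
  obtain ⟨q, hq⟩ := exists_expEnd_eq_one_add K hξ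
  rw [← Submodule.mem_stabilizerSubalgebra]
  constructor
  · intro h
    have hexp : expEnd K ξ ∈ N.stabilizerSubalgebra := Submodule.map_le_iff_le_comap.mp h.le
    rw [hq] at hexp
    exact Subalgebra.mem_of_add_sq_mul_aeval_mem hξ q
      (by simpa using sub_mem hexp (one_mem N.stabilizerSubalgebra))
  · intro h
    have hg : aeval ξ q ∈ N.stabilizerSubalgebra :=
      Algebra.adjoin_le (Set.singleton_subset_iff.mpr h) (aeval_mem_adjoin_singleton A ξ)
    refine Submodule.map_eq_self_of_isNilpotent_sub_one ?_ ?_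
    · rw [hq]
      exact add_mem (one_mem _) (add_mem h (mul_mem (pow_mem h 2) hg))
    · have hcomm : Commute ξ (1 + ξ * aeval ξ q) := by
        have := (Commute.all X (1 + X * q)).map (aeval ξ : A[X] →ₐ[A] Module.End A M)
        rwa [map_add, map_one, map_mul, aeval_X] at this
      rw [hq, add_sub_cancel_left, sq, mul_assoc, ← mul_one_add]
      exact hcomm.isNilpotent_mul_right hξ

end

/-- `End⁰(V) ⊗ 𝔪_A` is modelled as `𝔪_A • End_A(A ⊗ V)`, and `End⁰(V; F) ⊗ 𝔪_A` inside it by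
the condition that `ξ` preserves `F ⊗ A`. -/
theorem stmt_13_general [Field K] [CommRing A] [Algebra K A]
    [IsLocalRing A] [IsArtinianRing A]
    [AddCommGroup V] [Module K V] (F : Submodule K V)
    (ξ : Module.End A (A ⊗[K] V))
    (hξ : ξ ∈ (maximalIdeal A) • (⊤ : Submodule A (Module.End A (A ⊗[K] V)))) :
    Submodule.map (expEnd K ξ) (F.baseChange A) = F.baseChange A ↔
      ∀ u ∈ F.baseChange A, ξ u ∈ F.baseChange A :=
  map_expEnd_eq_self_iff K (Module.End.isNilpotent_of_mem_smul_top
    ((isArtinianRing_iff_isNilpotent_maximalIdeal A).mp ‹_›) hξ) _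

/-- For a DG-vector space `V` over a field `K` of characteristic `0`, a DG-subspace
`F ⊆ V`, a local Artin `K`-algebra `A` and `ξ ∈ End⁰(V) ⊗ 𝔪_A` (modelled as an
`A`-linear endomorphism of `A ⊗ V` lying in `𝔪_A • End`), one has
`e^ξ(F ⊗ A) = F ⊗ A` iff `ξ ∈ End⁰(V; F) ⊗ 𝔪_A`, i.e. iff `ξ` preserves `F ⊗ A`. -/
theorem stmt_13 [Field K] [CharZero K] [CommRing A] [Algebra K A]
    [IsLocalRing A] [IsArtinianRing A]
    [AddCommGroup V] [Module K V] (F : Submodule K V)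
    (ξ : Module.End A (A ⊗[K] V))
    (hξ : ξ ∈ (maximalIdeal A) • (⊤ : Submodule A (Module.End A (A ⊗[K] V)))) :
    Submodule.map (expEnd K ξ) (F.baseChange A) = F.baseChange A ↔
      ∀ u ∈ F.baseChange A, ξ u ∈ F.baseChange A :=
  stmt_13_general F ξ hξ
end
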